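/- Let f : D\{0} → ℂ be holomorphic on the punctured unit disc, satisfying the pointwise bound |f(z)| ≤ C|z|^{-2} and the integrability condition ∫_D |f| < ∞. Then z·f(z) extends holomorphically across 0, i.e. the function z ↦ z f(z) has a removable singularity at the origin. -/

import Mathlib

/-!
Since `‖z² f(z)‖ ≤ C`, Riemann's removable singularity theorem extends `z² f` to a function `H`
holomorphic on the disc. If `H 0 ≠ 0`, then `‖f z‖ ≥ c ‖z‖⁻²` near the origin for some `c > 0`,
and `‖z‖⁻²` is not integrable near the origin of the plane (in polar coordinates this is
`∫₀ʳ dt / t = ∞`). Hence `H 0 = 0`, and `z f(z) = (H z - H 0) / z` is the holomorphic `dslope H 0`.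
-/

open Metric MeasureTheory Set Filter Function
open scoped Topology

section HaarMeasure

variable {E F : Type*} [NormedAddCommGroup E] [NormedSpace ℝ E] [FiniteDimensional ℝ E]
  [Nontrivial E] [MeasurableSpace E] [BorelSpace E] [NormedAddCommGroup F]
  {μ : Measure E} [μ.IsAddHaarMeasure]

theorem not_integrableOn_ball_inv_norm_pow_finrank {r : ℝ} (hr : 0 < r) :
    ¬ IntegrableOn (fun x : E => ‖x‖⁻¹ ^ Module.finrank ℝ E) (ball 0 r) μ := by
  rw [integrableOn_fun_norm_addHaar (μ := μ) (f := fun t : ℝ => t⁻¹ ^ Module.finrank ℝ E)]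
  obtain ⟨k, hk⟩ := Nat.exists_eq_add_one.2 (Module.finrank_pos (R := ℝ) (M := E))
  intro h
  have h_inv : IntegrableOn (fun t : ℝ => t⁻¹) (Ioo 0 r) := by
    refine h.congr_fun (fun t ht => ?_) measurableSet_Ioo
    dsimp only
    rw [smul_eq_mul, hk, add_tsub_cancel_right, inv_pow, pow_succ, mul_inv, ← mul_assoc,
      mul_inv_cancel₀ (pow_ne_zero k ht.1.ne'), one_mul]
  rw [← intervalIntegrable_iff_integrableOn_Ioo_of_le hr.le, intervalIntegrable_inv_iff] at h_inv
  simp [hr.ne] at h_inv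

theorem not_integrableAtFilter_nhds_zero_of_inv_norm_pow_finrank_le {f : E → F} {c : ℝ}
    (hc : 0 < c) (h : ∀ᶠ x in 𝓝[≠] 0, c * ‖x‖⁻¹ ^ Module.finrank ℝ E ≤ ‖f x‖) :
    ¬ IntegrableAtFilter f (𝓝 0) μ := by
  rintro ⟨s, hs, hfs⟩
  rw [eventually_nhdsWithin_iff] at h
  obtain ⟨r, hr, hball⟩ := Metric.mem_nhds_iff.1 (inter_mem hs h)
  refine not_integrableOn_ball_inv_norm_pow_finrank (μ := μ) hr
    (((hfs.mono_set fun x hx => (hball hx).1).norm.const_mul c⁻¹).mono' (by fun_prop) ?_)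
  filter_upwards [ae_restrict_mem measurableSet_ball,
    ae_restrict_of_ae (compl_mem_ae_iff.2 (measure_singleton (μ := μ) 0))] with x hx hx0
  rw [Real.norm_of_nonneg (by positivity), le_inv_mul_iff₀ hc]
  exact (hball hx).2 hx0

theorem eq_zero_of_tendsto_norm_pow_finrank_mul_norm {f : E → F} {a : ℝ}
    (hf : IntegrableAtFilter f (𝓝 0) μ)
    (h : Tendsto (fun x => ‖x‖ ^ Module.finrank ℝ E * ‖f x‖) (𝓝[≠] 0) (𝓝 a)) : a = 0 := by
  have ha_nonneg : 0 ≤ a := ge_of_tendsto' h fun x => by positivity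
  by_contra ha0
  have ha : 0 < a := lt_of_le_of_ne ha_nonneg (Ne.symm ha0)
  refine not_integrableAtFilter_nhds_zero_of_inv_norm_pow_finrank_le (half_pos ha) ?_ hf
  filter_upwards [h.eventually (lt_mem_nhds (half_lt_self ha)), self_mem_nhdsWithin]
    with x hx hx0
  rw [inv_pow, ← div_eq_mul_inv, div_le_iff₀ (pow_pos (norm_pos_iff.2 hx0) _)]
  linarith

end HaarMeasure

theorem z_mul_extends_holomorphically_general
    (f : ℂ → ℂ) (C : ℝ)
    (hf : DifferentiableOn ℂ f (ball (0 : ℂ) 1 \ {0}))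
    (hbound : ∀ z ∈ ball (0 : ℂ) 1 \ {0}, ‖f z‖ ≤ C * (‖z‖⁻¹) ^ 2)
    (hint : MeasureTheory.IntegrableOn f (ball (0 : ℂ) 1)) :
    ∃ g : ℂ → ℂ, DifferentiableOn ℂ g (ball (0 : ℂ) 1) ∧
      ∀ z ∈ ball (0 : ℂ) 1 \ {0}, g z = z * f z := by
  have hs : ball (0 : ℂ) 1 ∈ 𝓝 0 := ball_mem_nhds 0 one_pos
  have h_norm : ∀ z, ‖z ^ 2 * f z‖ = ‖z‖ ^ Module.finrank ℝ ℂ * ‖f z‖ := by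
    simp [Complex.finrank_real_complex]
  have h_bdd : BddAbove (norm ∘ (fun z => z ^ 2 * f z) '' (ball (0 : ℂ) 1 \ {0})) := by
    refine ⟨C, forall_mem_image.2 fun z hz => ?_⟩
    have hz0 : ‖z‖ ≠ 0 := by simpa using hz.2
    calc ‖z ^ 2 * f z‖ ≤ ‖z‖ ^ 2 * (C * ‖z‖⁻¹ ^ 2) := by
          rw [norm_mul, norm_pow]; gcongr; exact hbound z hz
      _ = C := by field_simp
  set H := update (fun z => z ^ 2 * f z) 0 (limUnder (𝓝[≠] 0) fun z => z ^ 2 * f z)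
  have hH : DifferentiableOn ℂ H (ball 0 1) :=
    Complex.differentiableOn_update_limUnder_of_bddAbove hs (by fun_prop) h_bdd
  have hH_eq : ∀ z ≠ 0, H z = z ^ 2 * f z := fun z hz => update_of_ne hz _ _
  have hH0 : H 0 = 0 := by
    have hlim : Tendsto H (𝓝[≠] 0) (𝓝 (H 0)) :=
      (hH.differentiableAt hs).continuousAt.continuousWithinAt.tendsto
    refine norm_eq_zero.1 <| eq_zero_of_tendsto_norm_pow_finrank_mul_norm ⟨_, hs, hint⟩ ?_
    refine hlim.norm.congr' ?_
    filter_upwards [self_mem_nhdsWithin] with z hz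
    rw [hH_eq z hz, h_norm]
  refine ⟨dslope H 0, (Complex.differentiableOn_dslope hs).2 hH, fun z hz => ?_⟩
  rw [dslope_of_ne H hz.2, slope_def_field, hH_eq z hz.2, hH0, sub_zero, sub_zero, sq, mul_assoc, mul_div_cancel_left₀ _ hz.2]

/-- If `f` is holomorphic on the punctured unit disc, satisfies `|f(z)| ≤ C|z|⁻²` and is
integrable on the disc, then `z ↦ z·f(z)` extends holomorphically across the origin. -/
theorem z_mul_extends_holomorphically
    (f : ℂ → ℂ) (C : ℝ) (hC : 0 < C)
    (hf : DifferentiableOn ℂ f (ball (0 : ℂ) 1 \ {0}))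
    (hbound : ∀ z ∈ ball (0 : ℂ) 1 \ {0}, ‖f z‖ ≤ C * (‖z‖⁻¹) ^ 2)
    (hint : MeasureTheory.IntegrableOn f (ball (0 : ℂ) 1)) :
    ∃ g : ℂ → ℂ, DifferentiableOn ℂ g (ball (0 : ℂ) 1) ∧
      ∀ z ∈ ball (0 : ℂ) 1 \ {0}, g z = z * f z :=
  z_mul_extends_holomorphically_general f C hf hbound hint
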